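/- arXiv:2511.01662 — 8 statements merged into one kernel-verified Lean document; each statement's English description precedes it below -/
import Mathlib

section
/- Consider two DAGs G and G' with the same skeleton whose topological orderings differ only by altering the position of one node z (with x preceding y in both). Suppose that the induced subgraphs agree, G_{rch(G,x,y)} = G'_{rch(G',x,y)}, that clr(G,x,y) = clr(G',x,y), that forb(G,x,y) = forb(G',x,y), and that de_G(c) = de_{G'}(c) for every c ∈ clr(G,x,y). Then a set A is a valid adjustment set in G if and only if A is a valid adjustment set in G'. -/
/-- Adjacency in the skeleton of a digraph given by edge relation `G`. -/
def skelAdj {V : Type*} (G : V → V → Prop) (a b : V) : Prop := G a b ∨ G b a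

/-- A digraph is acyclic (a DAG) if it has no directed cycle. -/
def IsAcyclicDigraph {V : Type*} (G : V → V → Prop) : Prop :=
  ∀ v, ¬ Relation.TransGen G v v

/-- A path: a list of distinct vertices in which consecutive vertices are
joined by an edge (of either orientation). -/
def IsPath {V : Type*} (G : V → V → Prop) (p : List V) : Prop :=
  p.Nodup ∧ p.Chain' (skelAdj G)

/-- A path between `x` and `y` (written from `x` to `y`). -/
def IsPathBetween {V : Type*} (G : V → V → Prop) (x y : V) (p : List V) : Prop :=
  IsPath G p ∧ p.head? = some x ∧ p.getLast? = some y

/-- A directed (causal) path from `x` to `y`: every edge points towards `y`. -/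
def IsDirPath {V : Type*} (G : V → V → Prop) (x y : V) (p : List V) : Prop :=
  p.Nodup ∧ p.Chain' G ∧ p.head? = some x ∧ p.getLast? = some y

/-- `w` is a collider on the path `p`: both edges of `p` at `w` point into `w`. -/
def IsCollider {V : Type*} (G : V → V → Prop) (p : List V) (w : V) : Prop :=
  ∃ a b, [a, w, b] <:+: p ∧ G a w ∧ G b w

/-- Descendants of a vertex (including the vertex itself). -/
def descendants {V : Type*} (G : V → V → Prop) (v : V) : Set V :=
  {w | Relation.ReflTransGen G v w}

/-- Ancestors of a vertex (including the vertex itself). -/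
def ancestors {V : Type*} (G : V → V → Prop) (v : V) : Set V :=
  {w | Relation.ReflTransGen G w v}

/-- Parents of a vertex. -/
def parents {V : Type*} (G : V → V → Prop) (v : V) : Set V := {w | G w v}

/-- Descendants of a set of vertices. -/
def descendantsSet {V : Type*} (G : V → V → Prop) (W : Set V) : Set V :=
  ⋃ v ∈ W, descendants G v

/-- Ancestors of a set of vertices. -/
def ancestorsSet {V : Type*} (G : V → V → Prop) (W : Set V) : Set V :=
  ⋃ v ∈ W, ancestors G v

/-- Parents of a set of vertices. -/
def parentsSet {V : Type*} (G : V → V → Prop) (W : Set V) : Set V :=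
  ⋃ v ∈ W, parents G v

/-- A path `p` is blocked by a vertex set `A`: it contains a non-collider in `A`,
or a collider `c` with `descendants G c ∩ A = ∅`. -/
def Blocked {V : Type*} (G : V → V → Prop) (A : Set V) (p : List V) : Prop :=
  (∃ w ∈ p, ¬ IsCollider G p w ∧ w ∈ A) ∨
    (∃ c, IsCollider G p c ∧ descendants G c ∩ A = ∅)

/-- `cn G x y`: vertices `z ≠ x` lying on some directed path from `x` to `y`. -/
def cn {V : Type*} (G : V → V → Prop) (x y : V) : Set V :=
  {z | z ≠ x ∧ ∃ p, IsDirPath G x y p ∧ z ∈ p}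

/-- The forbidden set `forb G x y = de(cn(G,x,y)) ∪ {x}`. -/
def forb {V : Type*} (G : V → V → Prop) (x y : V) : Set V :=
  descendantsSet G (cn G x y) ∪ {x}

/-- `A ⊆ V \ {x,y}` is a valid adjustment set in `G`:
(i) `A ∩ forb(G,x,y) = ∅`, and (ii) every non-causal path from `x` to `y` is
blocked by `A`. -/
def IsValidAdjustment {V : Type*} (G : V → V → Prop) (x y : V) (A : Set V) : Prop :=
  x ∉ A ∧ y ∉ A ∧ A ∩ forb G x y = ∅ ∧
    ∀ p, IsPathBetween G x y p → ¬ p.Chain' G → Blocked G A p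

/-- `rch G x y`: vertices lying on some path between `x` and `y` in the skeleton. -/
def rch {V : Type*} (G : V → V → Prop) (x y : V) : Set V :=
  {z | ∃ p, IsPathBetween G x y p ∧ z ∈ p}

/-- Induced subgraph of `G` on a vertex set `S`. -/
def induce {V : Type*} (G : V → V → Prop) (S : Set V) : V → V → Prop :=
  fun a b => G a b ∧ a ∈ S ∧ b ∈ S

/-- `clr G x y`: all colliders on any path from `x` to `y` in the induced
subgraph of `G` on `rch G x y`. -/
def clr {V : Type*} (G : V → V → Prop) (x y : V) : Set V :=
  {c | ∃ p, IsPathBetween (induce G (rch G x y)) x y p ∧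
      IsCollider (induce G (rch G x y)) p c}

/-- The optimal adjustment set `opadj G x y = pa(cn(G,x,y)) \ forb(G,x,y)`. -/
def opadj {V : Type*} (G : V → V → Prop) (x y : V) : Set V :=
  parentsSet G (cn G x y) \ forb G x y

/-- `G^{pd}_{xy}`: `G` with every edge from `x` to a child of `x` that is an
ancestor of `y` removed. -/
def pdGraph {V : Type*} (G : V → V → Prop) (x y : V) : V → V → Prop :=
  fun a b => G a b ∧ ¬ (a = x ∧ b ∈ ancestors G y)

/-- `τ` is a topological ordering of `G`. -/
def IsTopOrder {V : Type*} (G : V → V → Prop) (τ : V → ℕ) : Prop :=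
  Function.Injective τ ∧ ∀ a b, G a b → τ a < τ b

/-- `G'` is obtained from `G` by altering the position of the single node `z`
in a topological ordering of `G` (keeping the skeleton and the orientation of
all edges not incident to `z`, and reorienting edges incident to `z` according
to the new ordering), with `x` preceding `y` in both orderings. -/
def AlterOne {V : Type*} (G G' : V → V → Prop) (z x y : V) : Prop :=
  ∃ τ τ' : V → ℕ,
    IsTopOrder G τ ∧ IsTopOrder G' τ' ∧
    τ x < τ y ∧ τ' x < τ' y ∧
    (∀ a b, a ≠ z → b ≠ z → (τ a < τ b ↔ τ' a < τ' b)) ∧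
    (∀ a b, a ≠ z → b ≠ z → (G a b ↔ G' a b)) ∧
    (∀ a b, a = z ∨ b = z → (G' a b ↔ (skelAdj G a b ∧ τ' a < τ' b)))

section InducedSubgraph

variable {V : Type*} {G G' : V → V → Prop} {S : Set V} {x y w : V} {p : List V}

lemma induce_iff_of_mem {a b : V} (ha : a ∈ S) (hb : b ∈ S) : induce G S a b ↔ G a b :=
  ⟨And.left, fun h => ⟨h, ha, hb⟩⟩

lemma isChain_induce_iff (hS : ∀ v ∈ p, v ∈ S) : p.IsChain (induce G S) ↔ p.IsChain G :=
  List.IsChain.iff_of_mem_imp fun _ _ ha hb => induce_iff_of_mem (hS _ ha) (hS _ hb)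

lemma isPath_induce_iff (hS : ∀ v ∈ p, v ∈ S) : IsPath (induce G S) p ↔ IsPath G p :=
  and_congr_right fun _ => List.IsChain.iff_of_mem_imp fun _ _ ha hb =>
    or_congr (induce_iff_of_mem (hS _ ha) (hS _ hb)) (induce_iff_of_mem (hS _ hb) (hS _ ha))

lemma isCollider_induce_iff (hS : ∀ v ∈ p, v ∈ S) :
    IsCollider (induce G S) p w ↔ IsCollider G p w := by
  refine exists₂_congr fun a b => and_congr_right fun hinf => ?_
  have hmem : ∀ v ∈ [a, w, b], v ∈ S := fun v hv => hS v (hinf.subset hv)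
  rw [induce_iff_of_mem (hmem a (by simp)) (hmem w (by simp)),
    induce_iff_of_mem (hmem b (by simp)) (hmem w (by simp))]

lemma IsPathBetween.mem_rch (hp : IsPathBetween G x y p) {v : V} (hv : v ∈ p) :
    v ∈ rch G x y :=
  ⟨p, hp, hv⟩

lemma isPathBetween_induce_rch_iff :
    IsPathBetween (induce G (rch G x y)) x y p ↔ IsPathBetween G x y p :=
  ⟨fun ⟨⟨hnd, hch⟩, hends⟩ => ⟨⟨hnd, hch.imp fun _ _ => Or.imp And.left And.left⟩, hends⟩,
    fun hp => ⟨(isPath_induce_iff fun _ => hp.mem_rch).2 hp.1, hp.2⟩⟩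

lemma clr_eq_of_induce_rch_eq (hsub : induce G (rch G x y) = induce G' (rch G' x y)) :
    clr G x y = clr G' x y := by
  simp only [clr, hsub]

/-- Validity of an adjustment set only sees the paths between `x` and `y`, which live in
`rch G x y`, together with `forb` and the descendants of the colliders on those paths. -/
lemma IsValidAdjustment.of_induce_rch_eq
    (hsub : induce G (rch G x y) = induce G' (rch G' x y))
    (hforb : forb G x y = forb G' x y)
    (hde : ∀ c ∈ clr G x y, descendants G c = descendants G' c)
    {A : Set V} (hv : IsValidAdjustment G x y A) : IsValidAdjustment G' x y A := by
  obtain ⟨hxA, hyA, hAforb, hblocked⟩ := hv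
  refine ⟨hxA, hyA, hforb ▸ hAforb, fun p hp' hnoncausal' => ?_⟩
  have hpI : IsPathBetween (induce G (rch G x y)) x y p :=
    hsub ▸ isPathBetween_induce_rch_iff.2 hp'
  have hp : IsPathBetween G x y p := isPathBetween_induce_rch_iff.1 hpI
  have hchain : p.IsChain G ↔ p.IsChain G' := by
    rw [← isChain_induce_iff fun _ => hp.mem_rch, hsub, isChain_induce_iff fun _ => hp'.mem_rch]
  have hcol : ∀ w, IsCollider G p w ↔ IsCollider G' p w := fun w => by
    rw [← isCollider_induce_iff fun _ => hp.mem_rch, hsub,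
      isCollider_induce_iff fun _ => hp'.mem_rch]
  rcases hblocked p hp (mt hchain.1 hnoncausal') with ⟨w, hwp, hw, hwA⟩ | ⟨c, hc, hcA⟩
  · exact Or.inl ⟨w, hwp, mt (hcol w).2 hw, hwA⟩
  · have hcclr : c ∈ clr G x y := ⟨p, hpI, (isCollider_induce_iff fun _ => hp.mem_rch).2 hc⟩
    exact Or.inr ⟨c, (hcol c).1 hc, hde c hcclr ▸ hcA⟩

end InducedSubgraph

theorem statement0_general {V : Type*} (G G' : V → V → Prop) (x y : V)
    (hsub : induce G (rch G x y) = induce G' (rch G' x y))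
    (hforb : forb G x y = forb G' x y)
    (hde : ∀ c ∈ clr G x y, descendants G c = descendants G' c)
    (A : Set V) :
    IsValidAdjustment G x y A ↔ IsValidAdjustment G' x y A :=
  ⟨IsValidAdjustment.of_induce_rch_eq hsub hforb hde,
    IsValidAdjustment.of_induce_rch_eq hsub.symm hforb.symm fun c hc =>
      (hde c (clr_eq_of_induce_rch_eq hsub ▸ hc)).symm⟩

/-- Proposition: invariant adjustment sets. -/
theorem statement0 {V : Type*} (G G' : V → V → Prop) (z x y : V)
    (halt : AlterOne G G' z x y)
    (hsub : induce G (rch G x y) = induce G' (rch G' x y))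
    (hclr : clr G x y = clr G' x y)
    (hforb : forb G x y = forb G' x y)
    (hde : ∀ c ∈ clr G x y, descendants G c = descendants G' c)
    (A : Set V) :
    IsValidAdjustment G x y A ↔ IsValidAdjustment G' x y A :=
  statement0_general G G' x y hsub hforb hde A
end

section
/- Consider two DAGs G and G' with the same skeleton whose topological orderings differ only by altering the position of one node z (with x preceding y in both). If z ∉ rch(G,x,y), then G_{rch(G,x,y)} = G'_{rch(G',x,y)} and clr(G,x,y) = clr(G',x,y). -/
/-- Corollary, part 1. -/
theorem statement2 {V : Type*} (G G' : V → V → Prop) (z x y : V)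
    (halt : AlterOne G G' z x y)
    (hz : z ∉ rch G x y) :
    induce G (rch G x y) = induce G' (rch G' x y) ∧
    clr G x y = clr G' x y := by
  obtain ⟨τ, τ', hτ, hτ', -, -, -, hedge, hzedge⟩ := halt
  have hnoG : ∀ a, ¬ G a a := fun a h => lt_irrefl _ (hτ.2 a a h)
  have hnoG' : ∀ a, ¬ G' a a := fun a h => lt_irrefl _ (hτ'.2 a a h)
  have hskel : skelAdj G = skelAdj G' := by
    funext a b
    apply propext
    by_cases hz : a = z ∨ b = z
    · have h1 := hzedge a b hz
      have h2 := hzedge b a (Or.symm hz)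
      constructor
      · rintro h
        have hab : a ≠ b := by
          rintro rfl
          exact (h.elim (hnoG a) (hnoG a))
        have : τ' a ≠ τ' b := fun he => hab (hτ'.1 he)
        rcases lt_or_gt_of_ne this with hlt | hgt
        · exact Or.inl (h1.mpr ⟨h, hlt⟩)
        · exact Or.inr (h2.mpr ⟨Or.symm h, hgt⟩)
      · rintro (h | h)
        · exact (h1.mp h).1
        · exact Or.symm (h2.mp h).1
    · push_neg at hz
      exact or_congr (hedge a b hz.1 hz.2) (hedge b a hz.2 hz.1)
  have hrch : rch G x y = rch G' x y := by
    simp only [rch, IsPathBetween, IsPath, hskel]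
  have hind : induce G (rch G x y) = induce G' (rch G' x y) := by
    funext a b
    apply propext
    have haz : a ∈ rch G x y → a ≠ z := fun h he => hz (he ▸ h)
    have hbz : b ∈ rch G x y → b ≠ z := fun h he => hz (he ▸ h)
    constructor
    · rintro ⟨hab, ha, hb⟩
      exact ⟨(hedge a b (haz ha) (hbz hb)).mp hab, hrch ▸ ha, hrch ▸ hb⟩
    · rintro ⟨hab, ha, hb⟩
      rw [← hrch] at ha hb
      exact ⟨(hedge a b (haz ha) (hbz hb)).mpr hab, ha, hb⟩
  refine ⟨hind, ?_⟩
  unfold clr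
  rw [hind]
end

section
/- Consider two DAGs G and G' with the same skeleton whose topological orderings differ only by altering the position of one node z (with x preceding y in both). If z ∉ rch(G,x,y) ∪ forb(G,x,y) ∪ pa_G(forb(G,x,y)), then forb(G,x,y) = forb(G',x,y). -/
/-! Altering `z` only reorients edges at `z` and keeps the skeleton, so paths between `x` and `y`
are unchanged; since `z ∉ rch G x y`, no directed path from `x` to `y` meets `z`, so `cn` is
unchanged too. Finally, `z` is neither in `forb G x y` nor a parent of a vertex in it, so no edge
leaving a descendant of a causal node is touched, and the descendants of causal nodes agree. -/

theorem Relation.reflTransGen_iff_of_forall_reflTransGen {V : Type*} {R S : V → V → Prop}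
    {v w : V} (hRS : ∀ a b, Relation.ReflTransGen R v a → (R a b ↔ S a b)) :
    Relation.ReflTransGen R v w ↔ Relation.ReflTransGen S v w := by
  constructor
  · intro h
    induction h with
    | refl => exact .refl
    | tail hva hab ih => exact ih.tail ((hRS _ _ hva).mp hab)
  · intro h
    induction h with
    | refl => exact .refl
    | tail _ hab ih => exact ih.tail ((hRS _ _ ih).mpr hab)

section

variable {V : Type*} {G G' : V → V → Prop} {z x y : V}

theorem parentsSet_mono {A B : Set V} (h : A ⊆ B) : parentsSet G A ⊆ parentsSet G B :=
  Set.biUnion_subset_biUnion_left h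

theorem descendants_subset_forb {v : V} (hv : v ∈ cn G x y) : descendants G v ⊆ forb G x y :=
  fun _ hw => Or.inl (Set.mem_biUnion hv hw)

theorem IsTopOrder.ne_of_skelAdj {τ : V → ℕ} (hτ : IsTopOrder G τ) {a b : V}
    (h : skelAdj G a b) : a ≠ b := by
  rintro rfl
  exact h.elim (fun h => lt_irrefl _ (hτ.2 a a h)) (fun h => lt_irrefl _ (hτ.2 a a h))

theorem AlterOne.skelAdj_eq (h : AlterOne G G' z x y) : skelAdj G = skelAdj G' := by
  obtain ⟨τ, τ', hτ, hτ', -, -, -, hfix, hzedge⟩ := h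
  funext a b
  by_cases hab : a = z ∨ b = z
  · have hne : skelAdj G a b → τ' a ≠ τ' b := fun h e => hτ.ne_of_skelAdj h (hτ'.1 e)
    simp only [skelAdj, hzedge a b hab, hzedge b a hab.symm] at hne ⊢
    grind
  · rw [not_or] at hab
    simp only [skelAdj, hfix a b hab.1 hab.2, hfix b a hab.2 hab.1]

theorem rch_congr (h : skelAdj G = skelAdj G') : rch G x y = rch G' x y := by
  simp only [rch, IsPathBetween, IsPath, h]

theorem IsDirPath.subset_rch {p : List V} (hp : IsDirPath G x y p) : ∀ w ∈ p, w ∈ rch G x y :=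
  fun _ hw => ⟨p, ⟨⟨hp.1, hp.2.1.imp fun _ _ => Or.inl⟩, hp.2.2⟩, hw⟩

theorem isDirPath_congr {p : List V} (h : ∀ a ∈ p, ∀ b ∈ p, G a b ↔ G' a b) :
    IsDirPath G x y p ↔ IsDirPath G' x y p :=
  and_congr_right fun _ => and_congr_left fun _ =>
    List.IsChain.iff_of_mem_imp fun a b ha hb => h a ha b hb

variable (hskel : skelAdj G = skelAdj G') (hfix : ∀ a b, a ≠ z → b ≠ z → (G a b ↔ G' a b))
include hskel hfix

theorem isDirPath_iff_of_notMem_rch (hz : z ∉ rch G x y) (p : List V) :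
    IsDirPath G x y p ↔ IsDirPath G' x y p := by
  have avoid : ∀ {H : V → V → Prop}, z ∉ rch H x y → IsDirPath H x y p → ∀ w ∈ p, w ≠ z :=
    fun hz hp w hw e => hz (e ▸ hp.subset_rch w hw)
  have hz' : z ∉ rch G' x y := rch_congr hskel ▸ hz
  constructor
  · intro hp
    exact (isDirPath_congr fun a ha b hb => hfix a b (avoid hz hp a ha) (avoid hz hp b hb)).mp hp
  · intro hp
    exact (isDirPath_congr fun a ha b hb => hfix a b (avoid hz' hp a ha) (avoid hz' hp b hb)).mpr hp

theorem cn_congr (hz : z ∉ rch G x y) : cn G x y = cn G' x y := by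
  simp only [cn, isDirPath_iff_of_notMem_rch hskel hfix hz]

theorem descendants_congr {v : V} (hzde : z ∉ descendants G v)
    (hzpa : z ∉ parentsSet G (descendants G v)) : descendants G v = descendants G' v := by
  ext w
  refine Relation.reflTransGen_iff_of_forall_reflTransGen fun a b (ha : a ∈ descendants G v) => ?_
  have haz : a ≠ z := fun e => hzde (e ▸ ha)
  by_cases hbz : b = z
  · subst hbz
    have hab : ¬ skelAdj G a b := by
      rintro (hab | hba)
      · exact hzde (Relation.ReflTransGen.tail ha hab)
      · exact hzpa (Set.mem_biUnion ha hba)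
    exact iff_of_false (fun h => hab (Or.inl h)) (fun h => hab (hskel ▸ Or.inl h))
  · exact hfix a b haz hbz

end

/-- Corollary, part 2. -/
theorem statement3 {V : Type*} (G G' : V → V → Prop) (z x y : V)
    (halt : AlterOne G G' z x y)
    (hz : z ∉ rch G x y ∪ forb G x y ∪ parentsSet G (forb G x y)) :
    forb G x y = forb G' x y := by
  obtain ⟨⟨hzrch, hzforb⟩, hzpa⟩ := by simpa only [Set.mem_union, not_or] using hz
  have hskel := halt.skelAdj_eq
  obtain ⟨-, -, -, -, -, -, -, hfix, -⟩ := halt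
  have hde : ∀ v ∈ cn G x y, descendants G v = descendants G' v := fun v hv =>
    descendants_congr hskel hfix (fun h => hzforb (descendants_subset_forb hv h))
      (fun h => hzpa (parentsSet_mono (descendants_subset_forb hv) h))
  simp only [forb, descendantsSet, ← cn_congr hskel hfix hzrch, Set.iUnion₂_congr hde]
end

section
/- Consider two DAGs G and G' with the same skeleton whose topological orderings differ only by altering the position of one node z (with x preceding y in both). If z ∉ rch(G,x,y) ∪ de_G(clr(G,x,y)) ∪ pa_G(de_G(clr(G,x,y))), then de_G(c) = de_{G'}(c) for every c ∈ clr(G,x,y). -/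
/-- Corollary, part 3. -/
theorem statement4 {V : Type*} (G G' : V → V → Prop) (z x y : V)
    (halt : AlterOne G G' z x y)
    (hz : z ∉ rch G x y ∪ descendantsSet G (clr G x y) ∪
      parentsSet G (descendantsSet G (clr G x y))) :
    ∀ c ∈ clr G x y, descendants G c = descendants G' c := by
  obtain ⟨τ, τ', hτ, hτ', hxy, hxy', hord, hsame, hz'⟩ := halt
  simp only [Set.mem_union, not_or] at hz
  obtain ⟨⟨-, hzde⟩, hzpa⟩ := hz
  -- z is not a descendant (in G) of any collider
  have hde : ∀ c ∈ clr G x y, z ∉ descendants G c := by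
    intro c hc hmem
    exact hzde (Set.mem_biUnion hc hmem)
  -- z is not a parent (in G) of any descendant of a collider
  have hpa : ∀ c ∈ clr G x y, ∀ w, w ∈ descendants G c → ¬ G z w := by
    intro c hc w hw hzw
    exact hzpa (Set.mem_biUnion (Set.mem_biUnion hc hw) hzw)
  intro c hc
  have hcz : c ≠ z := by
    intro h; exact hde c hc (h ▸ Relation.ReflTransGen.refl)
  ext w
  constructor
  · intro hw
    have : Relation.ReflTransGen G' c w ∧ w ≠ z := by
      induction hw with
      | refl => exact ⟨Relation.ReflTransGen.refl, hcz⟩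
      | tail hcb hbw ih =>
        rename_i b w'
        obtain ⟨ih1, hbz⟩ := ih
        have hwz : w' ≠ z := by
          intro h
          exact hde c hc (h ▸ hcb.tail hbw)
        exact ⟨ih1.tail ((hsame b w' hbz hwz).mp hbw), hwz⟩
    exact this.1
  · intro hw
    have : Relation.ReflTransGen G c w ∧ w ≠ z := by
      induction hw with
      | refl => exact ⟨Relation.ReflTransGen.refl, hcz⟩
      | tail hcb hbw ih =>
        rename_i b w'
        obtain ⟨ih1, hbz⟩ := ih
        have hwz : w' ≠ z := by
          intro h
          have := (hz' b z (Or.inr rfl)).mp (h ▸ hbw)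
          rcases this.1 with hGbz | hGzb
          · exact hde c hc (ih1.tail hGbz)
          · exact hpa c hc b ih1 hGzb
        exact ⟨ih1.tail ((hsame b w' hbz hwz).mpr hbw), hwz⟩
    exact this.1
end

section
/- Let G be a DAG with distinct vertices x and y, let A be a valid adjustment set in G, and let A_O ⊆ opadj(G,x,y). Then x is d-separated from A_O \ A given A in G, i.e., for every z ∈ A_O \ A, every path between x and z in G is blocked by A. -/
/-!
Let `z ∈ A_O \ A` be a parent of some `c ∈ cn`, so that `z → c → ⋯ → y` is a causal path `r`
whose vertices after `z` lie in `cn ⊆ forb`. If a path `p` from `x` to `z` were open given `A`,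
splice it into `r` at the first vertex `w` of `p` on `r`. If the spliced path is causal, then
`w ∈ cn`, and an open path that enters `de(cn)` along an edge into `w` never leaves it (a collider
in `de(cn)` has no descendant in `A`), so `z ∈ de(cn) ⊆ forb`, contradicting `z ∈ opadj`.
Otherwise it is a non-causal path from `x` to `y`, hence blocked by `A`; but up to `w` it agrees
with `p`, while its causal tail has no colliders and avoids `A`, so `A` would block `p` as well.
-/

namespace List
variable {α : Type*} {l₁ l₂ : List α} {a b t w : α}

theorem infix_append_cons_of_mem_left (hnd : (l₁ ++ w :: l₂).Nodup)
    (h : [a, t, b] <:+: l₁ ++ w :: l₂) (ht : t ∈ l₁) : [a, t, b] <:+: l₁ ++ [w] := by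
  induction l₁ with
  | nil => simp at ht
  | cons u l₁ ih =>
    rw [cons_append, nodup_cons] at hnd
    rw [cons_append, infix_cons_iff] at h
    rcases h with h | h
    · refine IsPrefix.isInfix ?_
      rcases l₁ with _ | ⟨v, _ | ⟨v', l₁⟩⟩ <;> simp_all
    · have htu : t ≠ u := by rintro rfl; exact hnd.1 (h.mem (by simp))
      exact (ih hnd.2 h (by simpa [htu] using ht)).trans (infix_cons (infix_refl _))

theorem infix_of_append_of_mem_right (hnd : (l₁ ++ l₂).Nodup)
    (h : [a, t, b] <:+: l₁ ++ l₂) (ht : t ∈ l₂) : [t, b] <:+: l₂ := by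
  induction l₁ with
  | nil => exact (infix_cons (infix_refl _)).trans h
  | cons u l₁ ih =>
    rw [cons_append, nodup_cons] at hnd
    rw [cons_append, infix_cons_iff] at h
    rcases h with h | h
    · rcases l₁ with _ | ⟨v, l₁⟩
      · exact (cons_prefix_cons.mp h).2.isInfix
      · obtain rfl : t = v := by simp_all
        exact absurd ht (disjoint_of_nodup_append hnd.2 mem_cons_self)
    · exact ih hnd.2 h

theorem exists_eq_append_cons_of_exists {l : List α} {P : α → Prop}
    (h : ∃ a ∈ l, P a) : ∃ l₁ a l₂, l = l₁ ++ a :: l₂ ∧ P a ∧ ∀ b ∈ l₁, ¬ P b := by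
  classical
  obtain ⟨a, ha⟩ := Option.isSome_iff_exists.mp
    (find?_isSome (p := fun a => decide (P a)).mpr (by simpa using h))
  obtain ⟨hPa, l₁, l₂, rfl, hl₁⟩ := find?_eq_some_iff_append.mp ha
  exact ⟨l₁, a, l₂, rfl, by simpa using hPa, by simpa using hl₁⟩

end List

section
variable {V : Type*} {G : V → V → Prop}

theorem IsAcyclicDigraph.asymm (hG : IsAcyclicDigraph G) {a b : V} (hab : G a b) : ¬ G b a :=
  fun hba => hG a (.head hab (.single hba))

theorem IsCollider.mono {l l' : List V} {t : V} (h : IsCollider G l t) (hl : l <:+: l') :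
    IsCollider G l' t := by
  obtain ⟨a, b, hab, ha, hb⟩ := h
  exact ⟨a, b, hab.trans hl, ha, hb⟩

theorem isCollider_append_cons_iff {l₁ l₂ : List V} {w t : V} (hnd : (l₁ ++ w :: l₂).Nodup)
    (ht : t ∈ l₁) : IsCollider G (l₁ ++ w :: l₂) t ↔ IsCollider G (l₁ ++ [w]) t := by
  refine ⟨fun ⟨a, b, hab, ha, hb⟩ => ⟨a, b, ?_, ha, hb⟩, fun h => h.mono ?_⟩
  · exact List.infix_append_cons_of_mem_left hnd hab ht
  · exact (List.prefix_append_right_inj l₁).mpr (by simp) |>.isInfix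

theorem not_isCollider_append_of_mem_right (hG : IsAcyclicDigraph G) {l₁ l₂ : List V} {t : V}
    (hnd : (l₁ ++ l₂).Nodup) (hl₂ : l₂.IsChain G) (ht : t ∈ l₂) :
    ¬ IsCollider G (l₁ ++ l₂) t := by
  rintro ⟨a, b, hab, -, hbt⟩
  have htb : G t b := by
    simpa using hl₂.infix (List.infix_of_append_of_mem_right hnd hab ht)
  exact hG.asymm htb hbt

theorem subset_descendantsSet (W : Set V) : W ⊆ descendantsSet G W :=
  fun _ hv => Set.mem_biUnion hv Relation.ReflTransGen.refl

theorem descendants_subset_descendantsSet {W : Set V} {v : V} (hv : v ∈ descendantsSet G W) :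
    descendants G v ⊆ descendantsSet G W := by
  obtain ⟨u, hu, huv⟩ := Set.mem_iUnion₂.mp hv
  exact fun w hw => Set.mem_biUnion hu (huv.trans hw)

theorem forall_mem_of_enters_closed {D : Set V} (hD : ∀ ⦃u v⦄, u ∈ D → G u v → v ∈ D)
    {a w : V} {l : List V} (hl : (a :: w :: l).IsChain (skelAdj G)) (haw : G a w) (hw : w ∈ D)
    (hcol : ∀ c ∈ D, ¬ IsCollider G (a :: w :: l) c) : ∀ v ∈ w :: l, v ∈ D := by
  induction l generalizing a w with
  | nil => simpa using hw
  | cons b l ih =>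
    rw [List.isChain_cons_cons] at hl
    rcases hl.2.rel with hwb | hbw
    · have hcol' : ∀ c ∈ D, ¬ IsCollider G (w :: b :: l) c :=
        fun c hc h => hcol c hc (h.mono (List.infix_cons (List.infix_refl _)))
      simpa [hw] using ih hl.2 hwb (hD hw hwb) hcol'
    · exact absurd ⟨a, b, (List.prefix_append [a, w, b] l).isInfix, haw, hbw⟩ (hcol w hw)

theorem forall_mem_descendantsSet_of_not_blocked {W A : Set V}
    (hA : ∀ v ∈ A, v ∉ descendantsSet G W) {l₀ l : List V} {a w : V}
    (hp : (l₀ ++ a :: w :: l).IsChain (skelAdj G)) (haw : G a w) (hw : w ∈ W)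
    (hopen : ¬ Blocked G A (l₀ ++ a :: w :: l)) : ∀ v ∈ w :: l, v ∈ descendantsSet G W := by
  have hinf : a :: w :: l <:+: l₀ ++ a :: w :: l := (List.suffix_append l₀ _).isInfix
  refine forall_mem_of_enters_closed ?_ (hp.infix hinf) haw (subset_descendantsSet _ hw) ?_
  · exact fun u v hu huv => descendants_subset_descendantsSet hu (.single huv)
  · refine fun c hc hcc => hopen (.inr ⟨c, hcc.mono hinf, ?_⟩)
    exact Set.eq_empty_of_forall_notMem fun u ⟨hu, huA⟩ =>
      hA u huA (descendants_subset_descendantsSet hc hu)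

theorem IsDirPath.of_append_cons {a y w : V} {l₁ l₂ : List V}
    (h : IsDirPath G a y (l₁ ++ w :: l₂)) : IsDirPath G w y (w :: l₂) := by
  obtain ⟨hnd, hch, -, hlast⟩ := h
  exact ⟨hnd.sublist (List.sublist_append_right _ _),
    (hch : List.IsChain G _).suffix (List.suffix_append _ _), rfl, by simpa using hlast⟩

theorem IsDirPath.cons {z c y : V} {l : List V} (hzc : G z c) (hz : z ∉ c :: l)
    (h : IsDirPath G c y (c :: l)) : IsDirPath G z y (z :: c :: l) := by
  obtain ⟨hnd, hch, -, hlast⟩ := h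
  exact ⟨List.nodup_cons.mpr ⟨hz, hnd⟩, List.IsChain.cons_cons hzc hch, rfl, by simpa using hlast⟩

theorem IsPathBetween.append_dirPath {x z y w : V} {l₁ l₂ m : List V}
    (hp : IsPathBetween G x z (l₁ ++ w :: l₂)) (hq : IsDirPath G w y (w :: m))
    (hdisj : ∀ u ∈ l₁, u ∉ w :: m) : IsPathBetween G x y (l₁ ++ w :: m) := by
  obtain ⟨⟨hnd, hch⟩, hhd, -⟩ := hp
  obtain ⟨hqnd, hqch, -, hqlast⟩ := hq
  rw [List.nodup_append] at hnd
  replace hch := List.isChain_append.mp hch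
  refine ⟨⟨List.nodup_append.mpr ⟨hnd.1, hqnd, fun u hu v hv huv => hdisj u hu (huv ▸ hv)⟩,
    List.isChain_append.mpr ⟨hch.1, (hqch : List.IsChain G _).imp fun _ _ => Or.inl, ?_⟩⟩,
    by simpa [List.head?_append] using hhd, by simpa [List.getLast?_append] using hqlast⟩
  simpa using hch.2.2

theorem exists_dirPath_of_mem_cn {x y c : V} (hc : c ∈ cn G x y) :
    ∃ l, IsDirPath G c y (c :: l) ∧ ∀ v ∈ c :: l, v ∈ cn G x y := by
  obtain ⟨hcx, q, hq, hcq⟩ := hc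
  obtain ⟨s, l, rfl⟩ := List.append_of_mem hcq
  have hx : x ∉ c :: l := by
    obtain ⟨hnd, -, hhd, -⟩ := hq
    rcases s with _ | ⟨u, s⟩
    · simp_all
    · obtain rfl : u = x := by simpa using hhd
      exact List.disjoint_of_nodup_append hnd List.mem_cons_self
  exact ⟨l, hq.of_append_cons, fun v hv =>
    ⟨fun hvx => hx (hvx ▸ hv), _, hq, List.mem_append_right _ hv⟩⟩

theorem Blocked.of_append_cons_chain (hG : IsAcyclicDigraph G) {A : Set V} {l₁ l₂ m : List V}
    {w : V} (hnd : (l₁ ++ w :: l₂).Nodup) (hnd' : (l₁ ++ w :: m).Nodup)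
    (hm : (w :: m).IsChain G) (hmA : ∀ v ∈ w :: m, v ∉ A) (h : Blocked G A (l₁ ++ w :: m)) :
    Blocked G A (l₁ ++ w :: l₂) := by
  rcases h with ⟨t, ht, htnc, htA⟩ | ⟨t, htc, htde⟩
  · have ht₁ : t ∈ l₁ := (List.mem_append.mp ht).resolve_right fun h => hmA t h htA
    refine .inl ⟨t, List.mem_append_left _ ht₁, fun htc => htnc ?_, htA⟩
    exact (isCollider_append_cons_iff hnd' ht₁).mpr ((isCollider_append_cons_iff hnd ht₁).mp htc)
  · have ht : t ∈ l₁ ++ w :: m := by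
      obtain ⟨_, _, hinf, -⟩ := htc
      exact List.IsInfix.mem (by simp) hinf
    have ht₁ : t ∈ l₁ := (List.mem_append.mp ht).resolve_right fun h =>
      not_isCollider_append_of_mem_right hG hnd' hm h htc
    refine .inr ⟨t, ?_, htde⟩
    exact (isCollider_append_cons_iff hnd ht₁).mpr ((isCollider_append_cons_iff hnd' ht₁).mp htc)

theorem IsValidAdjustment.notMem_forb {x y : V} {A : Set V} (hA : IsValidAdjustment G x y A)
    {v : V} (hv : v ∈ A) : v ∉ forb G x y :=
  fun hvF => Set.eq_empty_iff_forall_notMem.mp hA.2.2.1 v ⟨hv, hvF⟩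

theorem blocked_of_dirPath_through_cn (hG : IsAcyclicDigraph G) {x y : V} {A : Set V}
    (hA : IsValidAdjustment G x y A) {z : V} {r : List V} (hzA : z ∉ A)
    (hzF : z ∉ forb G x y) (hr : IsDirPath G z y (z :: r)) (hr_cn : ∀ v ∈ r, v ∈ cn G x y)
    {p : List V} (hp : IsPathBetween G x z p) : Blocked G A p := by
  have hD_forb : descendantsSet G (cn G x y) ⊆ forb G x y := Set.subset_union_left
  have hx : x ∉ z :: r := by
    rintro (_ | ⟨_, hxr⟩)
    · exact hzF (Or.inr rfl)
    · exact (hr_cn x hxr).1 rfl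
  have hzp : z ∈ p := List.mem_of_getLast? hp.2.2
  obtain ⟨p₁, w, p₂, rfl, hw, hp₁⟩ :=
    List.exists_eq_append_cons_of_exists ⟨z, hzp, List.mem_cons_self⟩
  obtain ⟨r₁, r₂, hr₁₂⟩ := List.append_of_mem hw
  have hq : IsDirPath G w y (w :: r₂) := (hr₁₂ ▸ hr).of_append_cons
  have hp' := hp.append_dirPath hq fun u hu hu' => hp₁ u hu (hr₁₂ ▸ List.mem_append_right _ hu')
  by_cases hcausal : (p₁ ++ w :: r₂).IsChain G
  · have hwcn : w ∈ cn G x y := ⟨fun h => hx (h ▸ hw), _, ⟨hp'.1.1, hcausal, hp'.2⟩,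
      List.mem_append_right _ List.mem_cons_self⟩
    obtain ⟨p₀, a, rfl⟩ := (List.eq_nil_or_concat' p₁).resolve_left fun h =>
      hx ((by simpa [h] using hp.2.1 : w = x) ▸ hw)
    have haw : G a w := by simpa using hcausal.infix (show [a, w] <:+: _ from ⟨p₀, r₂, by simp⟩)
    have hzw : z ∈ w :: p₂ := by
      rcases List.mem_append.mp hzp with hz | hz
      · exact absurd List.mem_cons_self (hp₁ z hz)
      · exact hz
    by_contra hopen
    refine hzF (hD_forb (forall_mem_descendantsSet_of_not_blocked (A := A) (l₀ := p₀)
      ?_ (by rw [List.append_cons]; exact hp.1.2) haw hwcn (by rwa [List.append_cons]) z hzw))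
    exact fun v hvA hvD => hA.notMem_forb hvA (hD_forb hvD)
  · refine (hA.2.2.2 _ hp' hcausal).of_append_cons_chain hG hp.1.1 hp'.1.1 hq.2.1 ?_
    intro v hv hvA
    rcases (hr₁₂ ▸ List.mem_append_right _ hv : v ∈ z :: r) with _ | ⟨_, hv⟩
    · exact hzA hvA
    · exact hA.notMem_forb hvA (hD_forb (subset_descendantsSet _ (hr_cn v hv)))

end

theorem statement6_general {V : Type*} (G : V → V → Prop) (hG : IsAcyclicDigraph G)
    (x y : V) (A A_O : Set V)
    (hA : IsValidAdjustment G x y A)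
    (hAO : A_O ⊆ opadj G x y) :
    ∀ z ∈ A_O \ A, ∀ p, IsPathBetween G x z p → Blocked G A p := by
  rintro z ⟨hzO, hzA⟩ p hp
  obtain ⟨hz_pa, hzF⟩ := hAO hzO
  obtain ⟨c, hc, hzc⟩ : ∃ c ∈ cn G x y, G z c := by
    simpa [parentsSet, parents] using hz_pa
  obtain ⟨l, hl, hl_cn⟩ := exists_dirPath_of_mem_cn hc
  have hz : z ∉ c :: l := fun hz =>
    hzF (Set.subset_union_left (subset_descendantsSet _ (hl_cn z hz)))
  exact blocked_of_dirPath_through_cn hG hA hzA hzF (hl.cons hzc hz) hl_cn hp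

/-- `x` is d-separated from `A_O \ A` given `A`. -/
theorem statement6 {V : Type*} (G : V → V → Prop) (hG : IsAcyclicDigraph G)
    (x y : V) (hxy : x ≠ y) (A A_O : Set V)
    (hA : IsValidAdjustment G x y A)
    (hAO : A_O ⊆ opadj G x y) :
    ∀ z ∈ A_O \ A, ∀ p, IsPathBetween G x z p → Blocked G A p :=
  statement6_general G hG x y A A_O hA hAO
end

section
/- Let G be a DAG with distinct vertices x and y, let τ be a topological ordering of G in which x precedes y, and let L_Y be the set of vertices that succeed y in τ. If A is a valid adjustment set for x and y in G, then A \ L_Y is also a valid adjustment set for x and y in G. -/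
/-! Let `c` be a `τ`-latest vertex of a non-causal path `p` between `x` and `y`. If `c` comes after
`y`, it is interior to `p` (as `x` precedes `y`), and both path edges at `c` point into it, so `c`
is a collider all of whose descendants come after `y`; it therefore blocks `p` given any set
avoiding `L_Y`. Otherwise `p` lies outside `L_Y`, so whatever vertex of `A` blocks `p` survives
the removal of `L_Y`. -/

lemma List.exists_infix_of_ne_head_of_ne_getLast {α : Type*} {p : List α} {x y c : α}
    (hx : p.head? = some x) (hy : p.getLast? = some y) (hc : c ∈ p) (hcx : c ≠ x)
    (hcy : c ≠ y) : ∃ a b, [a, c, b] <:+: p := by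
  obtain ⟨l₁, l₂, rfl⟩ := List.append_of_mem hc
  rcases l₁.eq_nil_or_concat' with rfl | ⟨l₁, a, rfl⟩
  · exact absurd (by simpa using hx) hcx
  cases l₂ with
  | nil => exact absurd (by simpa using hy) hcy
  | cons b l₂ => exact ⟨a, b, l₁, l₂, by simp⟩

section TopOrder

variable {V : Type*} {G : V → V → Prop} {τ : V → ℕ}

lemma IsTopOrder.le_of_reflTransGen (hτ : IsTopOrder G τ) {c d : V}
    (h : Relation.ReflTransGen G c d) : τ c ≤ τ d := by
  induction h with
  | refl => exact le_rfl
  | tail _ hbd ih => exact ih.trans (hτ.2 _ _ hbd).le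

lemma IsTopOrder.of_skelAdj_of_le (hτ : IsTopOrder G τ) {a c : V} (hac : skelAdj G a c)
    (hle : τ a ≤ τ c) : G a c :=
  hac.resolve_right fun hca => (hτ.2 _ _ hca).not_ge hle

lemma IsTopOrder.descendants_inter_diff_eq_empty (hτ : IsTopOrder G τ) {A : Set V} {c y : V}
    (hyc : τ y < τ c) : descendants G c ∩ (A \ {v | τ y < τ v}) = ∅ :=
  Set.eq_empty_of_forall_notMem fun _ ⟨hd, _, hdy⟩ =>
    hdy (hyc.trans_le (hτ.le_of_reflTransGen hd))

lemma IsPathBetween.exists_collider_of_lt (hτ : IsTopOrder G τ) {x y v : V} {p : List V}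
    (hp : IsPathBetween G x y p) (hv : v ∈ p) (hxv : τ x < τ v) (hyv : τ y < τ v) :
    ∃ c, IsCollider G p c ∧ τ v ≤ τ c := by
  obtain ⟨c, hcp, hmax⟩ := Set.exists_max_image {a | a ∈ p} τ p.finite_toSet ⟨v, hv⟩
  have hvc : τ v ≤ τ c := hmax v hv
  obtain ⟨a, b, hinfix⟩ := List.exists_infix_of_ne_head_of_ne_getLast hp.2.1 hp.2.2 hcp
    (by rintro rfl; exact hxv.not_ge hvc) (by rintro rfl; exact hyv.not_ge hvc)
  have hadj : skelAdj G a c ∧ skelAdj G c b := by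
    simpa using hp.1.2.infix hinfix
  refine ⟨c, ⟨a, b, hinfix, ?_, ?_⟩, hvc⟩
  · exact hτ.of_skelAdj_of_le hadj.1 (hmax a (hinfix.subset (by simp)))
  · exact hτ.of_skelAdj_of_le hadj.2.symm (hmax b (hinfix.subset (by simp)))

end TopOrder

lemma Blocked.diff_of_disjoint {V : Type*} {G : V → V → Prop} {A B : Set V} {p : List V}
    (hblock : Blocked G A p) (hp : ∀ w ∈ p, w ∉ B) : Blocked G (A \ B) p := by
  rcases hblock with ⟨w, hwp, hwnc, hwA⟩ | ⟨c, hc, hcA⟩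
  · exact Or.inl ⟨w, hwp, hwnc, hwA, hp w hwp⟩
  · exact Or.inr ⟨c, hc,
      Set.subset_eq_empty (Set.inter_subset_inter_right _ Set.sdiff_subset) hcA⟩

theorem statement9_general {V : Type*} (G : V → V → Prop) (x y : V)
    (τ : V → ℕ) (hτ : IsTopOrder G τ) (hpre : τ x < τ y)
    (A : Set V) (hA : IsValidAdjustment G x y A) :
    IsValidAdjustment G x y (A \ {v | τ y < τ v}) := by
  obtain ⟨hx, hy, hforb, hblock⟩ := hA
  refine ⟨fun h => hx h.1, fun h => hy h.1,
    Set.subset_eq_empty (Set.inter_subset_inter_left _ Set.sdiff_subset) hforb, ?_⟩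
  intro p hp hnc
  by_cases hlate : ∃ v ∈ p, τ y < τ v
  · obtain ⟨v, hv, hyv⟩ := hlate
    obtain ⟨c, hc, hvc⟩ := hp.exists_collider_of_lt hτ hv (hpre.trans hyv) hyv
    exact Or.inr ⟨c, hc, hτ.descendants_inter_diff_eq_empty (hyv.trans_le hvc)⟩
  · exact (hblock p hp hnc).diff_of_disjoint fun w hw hwy => hlate ⟨w, hw, hwy⟩

/-- Proposition: preceding topological order. -/
theorem statement9 {V : Type*} (G : V → V → Prop) (hG : IsAcyclicDigraph G)
    (x y : V) (hxy : x ≠ y)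
    (τ : V → ℕ) (hτ : IsTopOrder G τ) (hpre : τ x < τ y)
    (A : Set V) (hA : IsValidAdjustment G x y A) :
    IsValidAdjustment G x y (A \ {v | τ y < τ v}) :=
  statement9_general G x y τ hτ hpre A hA
end

section
/- Let G be a DAG with distinct vertices x and y. For every vertex z ∈ opadj(G,x,y), there exists a directed path in G from z to y all of whose intermediate vertices (i.e., all vertices on the path other than z itself) lie in forb(G,x,y). -/
/-- every vertex of `opadj` has a directed path to `y` whose
intermediate vertices all lie in `forb`. -/
theorem statement10 {V : Type*} (G : V → V → Prop) (hG : IsAcyclicDigraph G)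
    (x y : V) (hxy : x ≠ y) :
    ∀ z ∈ opadj G x y, ∃ p, IsDirPath G z y p ∧
      ∀ w ∈ p, w ≠ z → w ∈ forb G x y := by
  rintro z ⟨hpa, hzf⟩
  simp only [parentsSet, Set.mem_iUnion] at hpa
  obtain ⟨c, hc, hzc⟩ := hpa
  obtain ⟨hcx, p, hp, hcp⟩ := hc
  obtain ⟨hnd, hch, hhd, hlast⟩ := hp
  obtain ⟨l1, l2, rfl⟩ := List.append_of_mem hcp
  have hsuf : (c :: l2) <:+ (l1 ++ c :: l2) := ⟨l1, rfl⟩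
  -- x is not in c :: l2
  have hxnot : x ∉ c :: l2 := by
    cases l1 with
    | nil =>
      simp only [List.nil_append, List.head?_cons, Option.some.injEq] at hhd
      exact fun _ => hcx hhd
    | cons a l1' =>
      simp only [List.cons_append, List.head?_cons, Option.some.injEq] at hhd
      subst hhd
      intro hx
      have h : a ∉ l1' ++ c :: l2 := by
        have := hnd
        rw [List.cons_append, List.nodup_cons] at this
        exact this.1
      exact h (List.mem_append.mpr (Or.inr hx))
  -- every vertex of c :: l2 is in forb
  have hforb : ∀ w ∈ c :: l2, w ∈ forb G x y := by
    intro w hw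
    left
    simp only [descendantsSet, Set.mem_iUnion]
    refine ⟨w, ⟨fun h => hxnot (h ▸ hw), l1 ++ c :: l2,
      ⟨hnd, hch, hhd, hlast⟩, List.mem_append.mpr (Or.inr hw)⟩, Relation.ReflTransGen.refl⟩
  have hznot : z ∉ c :: l2 := fun h => hzf (hforb z h)
  have h2 : (c :: l2).getLast? = some y := by
    rw [List.getLast?_append] at hlast
    cases h : (c :: l2).getLast? with
    | none => simp at h
    | some w =>
      rw [h, Option.or] at hlast
      exact hlast
  refine ⟨z :: c :: l2, ⟨List.nodup_cons.mpr ⟨hznot, hsuf.sublist.nodup hnd⟩,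
    List.isChain_cons_cons.mpr ⟨hzc, hch.suffix hsuf⟩, rfl, ?_⟩, ?_⟩
  · rw [show z :: c :: l2 = [z] ++ (c :: l2) from rfl, List.getLast?_append, h2]
    rfl
  · intro w hw hwz
    rcases List.mem_cons.mp hw with h | h
    · exact (hwz h).elim
    · exact hforb w h
end

section
/- Let G be a DAG, let π be a path between two vertices x and y in G, and let C denote the set of colliders on π. Then every non-collider vertex on π (including the case where π has no colliders) belongs to an_G(C ∪ {x, y}); in particular, if π has no collider, every vertex on π is an ancestor of x or of y. -/
/-!
Walk along the path from a non-collider `w` in the direction of an edge leaving `w` (one exists,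
since otherwise `w` would be a collider or the path would end at `w`). As long as the edges keep
pointing onward we follow a directed path; the first edge that turns back makes the vertex where
it turns a collider, and if none turns back we reach an endpoint. Either way `w` is an ancestor of
a collider or of an endpoint.
-/

open Relation

namespace IsCollider

variable {V : Type*} {G : V → V → Prop}

theorem of_infix {p q : List V} {c : V} (hc : IsCollider G q c) (hqp : q <:+: p) :
    IsCollider G p c :=
  let ⟨a, b, hab, hac, hbc⟩ := hc
  ⟨a, b, hab.trans hqp, hac, hbc⟩

theorem reverse_iff {p : List V} {c : V} : IsCollider G p.reverse c ↔ IsCollider G p c := by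
  constructor
  · rintro ⟨a, b, hab, hac, hbc⟩
    exact ⟨b, a, List.reverse_infix.mp (by simpa using hab), hbc, hac⟩
  · rintro ⟨a, b, hab, hac, hbc⟩
    exact ⟨b, a, by simpa using List.reverse_infix.mpr hab, hbc, hac⟩

end IsCollider

section

variable {V : Type*} {G : V → V → Prop}

theorem skelAdj_symm {a b : V} (h : skelAdj G a b) : skelAdj G b a := h.symm

theorem exists_collider_or_getLast_of_cons_cons {a b : V} {t : List V}
    (hc : (a :: b :: t).IsChain (skelAdj G)) (hab : G a b) :
    ∃ v, ReflTransGen G a v ∧ (IsCollider G (a :: b :: t) v ∨ v ∈ (a :: b :: t).getLast?) := by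
  induction t generalizing a b with
  | nil => exact ⟨b, .single hab, Or.inr rfl⟩
  | cons c t ih =>
    rcases hc.tail.rel with hbc | hcb
    · obtain ⟨v, hbv, hv⟩ := ih hc.tail hbc
      refine ⟨v, hbv.head hab, hv.imp (fun h => h.of_infix (List.suffix_cons a _).isInfix) ?_⟩
      simp only [List.getLast?_cons_cons, imp_self]
    · exact ⟨b, .single hab, Or.inl ⟨a, c, ⟨[], t, rfl⟩, hab, hcb⟩⟩

theorem exists_collider_or_getLast_of_edge {p : List V} {a b : V}
    (hc : p.IsChain (skelAdj G)) (hp : [a, b] <:+: p) (hab : G a b) :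
    ∃ v, ReflTransGen G a v ∧ (IsCollider G p v ∨ v ∈ p.getLast?) := by
  obtain ⟨s, t, rfl⟩ := hp
  have hsuf : a :: b :: t <:+ s ++ [a, b] ++ t := ⟨s, by simp⟩
  obtain ⟨v, hav, hv⟩ := exists_collider_or_getLast_of_cons_cons (hc.infix hsuf.isInfix) hab
  refine ⟨v, hav, hv.imp (fun h => h.of_infix hsuf.isInfix) ?_⟩
  simp

theorem exists_collider_or_head_of_edge {p : List V} {a b : V}
    (hc : p.IsChain (skelAdj G)) (hp : [b, a] <:+: p) (hab : G a b) :
    ∃ v, ReflTransGen G a v ∧ (IsCollider G p v ∨ v ∈ p.head?) := by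
  have hc' : p.reverse.IsChain (skelAdj G) :=
    List.isChain_reverse.mpr (hc.imp fun _ _ h => skelAdj_symm h)
  obtain ⟨v, hav, hv⟩ :=
    exists_collider_or_getLast_of_edge hc' (by simpa using List.reverse_infix.mpr hp) hab
  exact ⟨v, hav, by simpa [IsCollider.reverse_iff] using hv⟩

theorem exists_collider_or_endpoint_of_not_collider {p : List V} {w : V}
    (hc : p.IsChain (skelAdj G)) (hw : w ∈ p) (hnc : ¬ IsCollider G p w) :
    ∃ v, ReflTransGen G w v ∧ (IsCollider G p v ∨ v ∈ p.head? ∨ v ∈ p.getLast?) := by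
  obtain ⟨l, r, rfl⟩ := List.append_of_mem hw
  rcases r with _ | ⟨v, r⟩
  · exact ⟨w, .refl, Or.inr (Or.inr (by simp))⟩
  have hwv : [w, v] <:+: l ++ w :: v :: r := ⟨l, r, by simp⟩
  rcases (hc.infix hwv).rel with hwv' | hvw
  · obtain ⟨u, hwu, hu⟩ := exists_collider_or_getLast_of_edge hc hwv hwv'
    exact ⟨u, hwu, hu.imp_right Or.inr⟩
  rcases l.eq_nil_or_concat with rfl | ⟨l, u, rfl⟩
  · exact ⟨w, .refl, Or.inr (Or.inl rfl)⟩
  have huw : [u, w] <:+: l.concat u ++ w :: v :: r := ⟨l, v :: r, by simp⟩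
  rcases (hc.infix huw).rel with huw' | hwu
  · exact absurd ⟨u, v, ⟨l, r, by simp⟩, huw', hvw⟩ hnc
  · obtain ⟨u', hwu', hu'⟩ := exists_collider_or_head_of_edge hc huw hwu
    exact ⟨u', hwu', hu'.imp_right Or.inl⟩

end

theorem statement12_general {V : Type*} (G : V → V → Prop)
    (x y : V) (p : List V) (hp : IsPathBetween G x y p) :
    (∀ w ∈ p, ¬ IsCollider G p w →
      w ∈ ancestorsSet G ({c | IsCollider G p c} ∪ {x, y})) ∧
    ((∀ c, ¬ IsCollider G p c) → ∀ w ∈ p, w ∈ ancestors G x ∪ ancestors G y) := by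
  obtain ⟨⟨-, hc⟩, hx, hy⟩ := hp
  have hanc : ∀ w ∈ p, ¬ IsCollider G p w →
      ∃ v ∈ {c | IsCollider G p c} ∪ {x, y}, ReflTransGen G w v := by
    intro w hw hnc
    obtain ⟨v, hwv, hv⟩ := exists_collider_or_endpoint_of_not_collider hc hw hnc
    refine ⟨v, ?_, hwv⟩
    rcases hv with hv | hv | hv
    · exact Or.inl hv
    · exact Or.inr (Or.inl (Option.some.inj (hv.symm.trans hx)))
    · exact Or.inr (Or.inr (Option.some.inj (hv.symm.trans hy)))
  refine ⟨fun w hw hnc => ?_, fun hnone w hw => ?_⟩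
  · obtain ⟨v, hv, hwv⟩ := hanc w hw hnc
    exact Set.mem_biUnion hv hwv
  · obtain ⟨v, hv | rfl | rfl, hwv⟩ := hanc w hw (hnone w)
    · exact absurd hv (hnone v)
    · exact Or.inl hwv
    · exact Or.inr hwv

/-- non-colliders on a path are ancestors of the colliders or of
the endpoints; in particular, on a collider-free path every vertex is an
ancestor of `x` or of `y`. -/
theorem statement12 {V : Type*} (G : V → V → Prop) (hG : IsAcyclicDigraph G)
    (x y : V) (p : List V) (hp : IsPathBetween G x y p) :
    (∀ w ∈ p, ¬ IsCollider G p w →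
      w ∈ ancestorsSet G ({c | IsCollider G p c} ∪ {x, y})) ∧
    ((∀ c, ¬ IsCollider G p c) → ∀ w ∈ p, w ∈ ancestors G x ∪ ancestors G y) :=
  statement12_general G x y p hp
end
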